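/- Let 0 < ω < 1/2 and 1/2 − √(ω−ω²) < τ < 1/2, and set z = (2τ−1 + i·√(4ω(1−ω)−(1−2τ)²)) / (2(1−ω)). Then 2ω·log₂|z| − 2τ·log₂|1+z| − 2(1−τ)·log₂|1−z| + 2H(ω) = H(ω) + H(τ) − 1, where H is the binary entropy function. -/

import Mathlib

/-!
Writing `d = 2(1 - ω)` and `D = 4ω(1 - ω) - (1 - 2τ)²`, the point `z` has real part `(2τ - 1)/d`
and `|z|² = ((2τ - 1)² + D)/d² = ω/(1 - ω)`. Since `|1 ± z|² = |z|² ± 2 Re z + 1`, this gives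
`|1 + z|² = 2τ/(1 - ω)` and `|1 - z|² = 2(1 - τ)/(1 - ω)`, and after taking logarithms the
`log₂(1 - ω)` terms combine with `ω log₂ ω` into `-H(ω)`, while the remaining `τ`-terms are
`H(τ) - 1`.
-/

/-- The binary entropy function `H(x) = −x log₂ x − (1−x) log₂ (1−x)`. -/
noncomputable def binH (x : ℝ) : ℝ :=
  -x * Real.logb 2 x - (1 - x) * Real.logb 2 (1 - x)

open Real

lemma Complex.sq_norm_one_add (z : ℂ) : ‖1 + z‖ ^ 2 = ‖z‖ ^ 2 + 2 * z.re + 1 := by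
  simp only [Complex.sq_norm, Complex.normSq_apply, Complex.add_re, Complex.add_im,
    Complex.one_re, Complex.one_im]
  ring

lemma Complex.sq_norm_one_sub (z : ℂ) : ‖1 - z‖ ^ 2 = ‖z‖ ^ 2 - 2 * z.re + 1 := by
  simp only [Complex.sq_norm, Complex.normSq_apply, Complex.sub_re, Complex.sub_im,
    Complex.one_re, Complex.one_im]
  ring

section

variable {ω τ : ℝ}

lemma binH_add_binH_sub_one_eq (hω0 : 0 < ω) (hω1 : ω < 1) (hτ0 : 0 < τ) (hτ1 : τ < 1) :
    ω * logb 2 (ω / (1 - ω)) - τ * logb 2 (2 * τ / (1 - ω))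
      - (1 - τ) * logb 2 (2 * (1 - τ) / (1 - ω)) + 2 * binH ω = binH ω + binH τ - 1 := by
  have h1ω : 1 - ω ≠ 0 := by linarith
  have h1τ : 1 - τ ≠ 0 := by linarith
  rw [logb_div hω0.ne' h1ω, logb_div (by positivity) h1ω, logb_div (by linarith) h1ω,
    logb_mul two_ne_zero hτ0.ne', logb_mul two_ne_zero h1τ, logb_self_eq_one one_lt_two]
  unfold binH
  ring

lemma exponent_eq_of_sq_norm_of_re {z : ℂ} (hω0 : 0 < ω) (hω1 : ω < 1) (hτ0 : 0 < τ)
    (hτ1 : τ < 1) (hz : ‖z‖ ^ 2 = ω / (1 - ω)) (hre : z.re = (2 * τ - 1) / (2 * (1 - ω))) :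
    2 * ω * logb 2 ‖z‖ - 2 * τ * logb 2 ‖1 + z‖ - 2 * (1 - τ) * logb 2 ‖1 - z‖ + 2 * binH ω =
      binH ω + binH τ - 1 := by
  have h1ω : 1 - ω ≠ 0 := by linarith
  have hadd : ‖1 + z‖ ^ 2 = 2 * τ / (1 - ω) := by
    rw [Complex.sq_norm_one_add, hz, hre]
    field_simp
    ring
  have hsub : ‖1 - z‖ ^ 2 = 2 * (1 - τ) / (1 - ω) := by
    rw [Complex.sq_norm_one_sub, hz, hre]
    field_simp
    ring
  rw [← binH_add_binH_sub_one_eq hω0 hω1 hτ0 hτ1, ← hz, ← hadd, ← hsub,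
    logb_pow, logb_pow, logb_pow]
  push_cast
  ring

end

theorem exponent_simplification_general (ω τ : ℝ)
    (hτ1 : 1 / 2 - Real.sqrt (ω - ω ^ 2) < τ) (hτ2 : τ < 1 / 2) :
    let z : ℂ := (((2 * τ - 1 : ℝ) : ℂ) +
      Complex.I * ((Real.sqrt (4 * ω * (1 - ω) - (1 - 2 * τ) ^ 2) : ℝ) : ℂ)) /
      (((2 * (1 - ω) : ℝ) : ℂ));
    2 * ω * Real.logb 2 ‖z‖ - 2 * τ * Real.logb 2 ‖1 + z‖
      - 2 * (1 - τ) * Real.logb 2 ‖1 - z‖ + 2 * binH ω =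
      binH ω + binH τ - 1 := by
  intro z
  have hD : 0 < 4 * ω * (1 - ω) - (1 - 2 * τ) ^ 2 := by
    have := (lt_sqrt (by linarith)).mp (show 1 / 2 - τ < √(ω - ω ^ 2) by linarith)
    nlinarith
  have hω0 : 0 < ω := by nlinarith [sq_nonneg (1 - 2 * τ)]
  have hω1 : ω < 1 := by nlinarith [sq_nonneg (1 - 2 * τ)]
  have hτ0 : 0 < τ := by nlinarith [sq_nonneg (1 - 2 * ω)]
  have h1ω : 1 - ω ≠ 0 := by linarith
  have hre : z.re = (2 * τ - 1) / (2 * (1 - ω)) := by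
    rw [Complex.div_ofReal_re]
    simp
  have him : z.im = √(4 * ω * (1 - ω) - (1 - 2 * τ) ^ 2) / (2 * (1 - ω)) := by
    rw [Complex.div_ofReal_im]
    simp
  refine exponent_eq_of_sq_norm_of_re hω0 hω1 hτ0 (by linarith) ?_ hre
  rw [Complex.sq_norm, Complex.normSq_apply, hre, him, ← sq, ← sq, div_pow, div_pow,
    sq_sqrt hD.le]
  field_simp
  ring

/-- with `z = (2τ−1 + i√(4ω(1−ω)−(1−2τ)²))/(2(1−ω))`,
`2ω log₂|z| − 2τ log₂|1+z| − 2(1−τ) log₂|1−z| + 2H(ω) = H(ω) + H(τ) − 1`. -/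
theorem exponent_simplification (ω τ : ℝ) (hω0 : 0 < ω) (hω : ω < 1 / 2)
    (hτ1 : 1 / 2 - Real.sqrt (ω - ω ^ 2) < τ) (hτ2 : τ < 1 / 2) :
    let z : ℂ := (((2 * τ - 1 : ℝ) : ℂ) +
      Complex.I * ((Real.sqrt (4 * ω * (1 - ω) - (1 - 2 * τ) ^ 2) : ℝ) : ℂ)) /
      (((2 * (1 - ω) : ℝ) : ℂ));
    2 * ω * Real.logb 2 ‖z‖ - 2 * τ * Real.logb 2 ‖1 + z‖
      - 2 * (1 - τ) * Real.logb 2 ‖1 - z‖ + 2 * binH ω =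
      binH ω + binH τ - 1 :=
  exponent_simplification_general ω τ hτ1 hτ2
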